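/- Let $G$ be a group, $l \ge 1$, and let $a_1,\dots,a_{2l}$ be elements of $G$ satisfying the braid relations. Set $\gamma_{i+1} = a_i a_{i+1} a_i^{-1}$ and $\bar\gamma_{i+1} = a_i^{-1} a_{i+1} a_i$. Then the sequence $(a_1, a_2, \dots, a_{2l})$ is Hurwitz equivalent to $(\gamma_2, \gamma_4, \dots, \gamma_{2l}, a_1, a_3, \dots, a_{2l-1})$, and the sequence $(a_{2l}, a_{2l-1}, \dots, a_1)$ is Hurwitz equivalent to $(a_{2l-1}, a_{2l-3}, \dots, a_3, a_1, \bar\gamma_{2l}, \bar\gamma_{2l-2}, \dots, \bar\gamma_4, \bar\gamma_2)$. -/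

import Mathlib

/-- One elementary (Hurwitz) transformation of sequences in a group. -/
def HurwitzStep {G : Type*} [Group G] (s t : List G) : Prop :=
  ∃ (l₁ l₂ : List G) (x y : G),
    (s = l₁ ++ x :: y :: l₂ ∧ t = l₁ ++ (x * y * x⁻¹) :: x :: l₂) ∨
    (s = l₁ ++ x :: y :: l₂ ∧ t = l₁ ++ y :: (y⁻¹ * x * y) :: l₂)

/-- Hurwitz equivalence: finitely many elementary transformations. -/
def HurwitzEquiv {G : Type*} [Group G] : List G → List G → Prop :=
  Relation.ReflTransGen HurwitzStep

/-- The sequence `a k, a (k-1), …, a m` (descending indices). -/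
def seqDesc {G : Type*} (a : ℕ → G) (k m : ℕ) : List G :=
  (List.range (k + 1 - m)).map fun i => a (k - i)

/-- The sequence `a m, a (m+1), …, a k` (ascending indices). -/
def seqAsc {G : Type*} (a : ℕ → G) (m k : ℕ) : List G :=
  (List.range (k + 1 - m)).map fun i => a (m + i)

/-!
Cut the sequence into consecutive pairs and apply one elementary move inside each pair:
`(a₁, a₂) ↦ (a₁ a₂ a₁⁻¹, a₁)` for the first claim, `(a₂, a₁) ↦ (a₁, a₁⁻¹ a₂ a₁)` for the second.
In the resulting sequence of pairs `(u₀, v₀, u₁, v₁, …)` every `v j` commutes with every later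
`u k`, because their indices differ by at least two; so all the `v`'s can be moved to the end by
swaps of commuting neighbours, which are themselves elementary moves.
-/

section

variable {α : Type*}

theorem List.map_range_two_mul (f : ℕ → α) (n : ℕ) :
    (List.range (2 * n)).map f = (List.range n).flatMap fun j => [f (2 * j), f (2 * j + 1)] := by
  induction n with
  | zero => rfl
  | succ n ih =>
    rw [Nat.mul_succ, List.range_succ, List.range_succ, List.range_succ, List.flatMap_append, ← ih]
    simp

theorem seqAsc_one_two_mul (a : ℕ → α) (n : ℕ) :
    seqAsc a 1 (2 * n) = (List.range n).flatMap fun j => [a (2 * j + 1), a (2 * j + 2)] := by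
  rw [seqAsc, Nat.add_sub_cancel, List.map_range_two_mul]
  simp only [Nat.add_comm 1, Nat.add_assoc]

theorem seqDesc_two_mul_one (a : ℕ → α) (n : ℕ) :
    seqDesc a (2 * n) 1 =
      (List.range n).flatMap fun j => [a (2 * n - 2 * j), a (2 * n - 2 * j - 1)] := by
  rw [seqDesc, Nat.add_sub_cancel, List.map_range_two_mul]
  simp only [Nat.sub_add_eq]

end

section

variable {G : Type*} [Group G]

namespace HurwitzStep

theorem append_append {s t : List G} (h : HurwitzStep s t) (u v : List G) :
    HurwitzStep (u ++ s ++ v) (u ++ t ++ v) := by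
  obtain ⟨l₁, l₂, x, y, ⟨rfl, rfl⟩ | ⟨rfl, rfl⟩⟩ := h
  · exact ⟨u ++ l₁, l₂ ++ v, x, y, .inl ⟨by simp, by simp⟩⟩
  · exact ⟨u ++ l₁, l₂ ++ v, x, y, .inr ⟨by simp, by simp⟩⟩

theorem symm {s t : List G} (h : HurwitzStep s t) : HurwitzStep t s := by
  obtain ⟨l₁, l₂, x, y, ⟨rfl, rfl⟩ | ⟨rfl, rfl⟩⟩ := h
  · exact ⟨l₁, l₂, x * y * x⁻¹, x, .inr ⟨rfl, by group⟩⟩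
  · exact ⟨l₁, l₂, y, y⁻¹ * x * y, .inl ⟨rfl, by group⟩⟩

end HurwitzStep

namespace HurwitzEquiv

theorem trans {s t r : List G} (h : HurwitzEquiv s t) (h' : HurwitzEquiv t r) :
    HurwitzEquiv s r :=
  Relation.ReflTransGen.trans h h'

theorem symm {s t : List G} (h : HurwitzEquiv s t) : HurwitzEquiv t s := by
  induction h with
  | refl => exact .refl
  | tail _ hst ih => exact Relation.ReflTransGen.head hst.symm ih

theorem append_append {s t : List G} (h : HurwitzEquiv s t) (u v : List G) :
    HurwitzEquiv (u ++ s ++ v) (u ++ t ++ v) :=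
  Relation.ReflTransGen.lift (fun w => u ++ w ++ v)
    (fun _ _ hst => HurwitzStep.append_append hst u v) _ _ h

theorem append_left {s t : List G} (h : HurwitzEquiv s t) (u : List G) :
    HurwitzEquiv (u ++ s) (u ++ t) := by
  simpa using h.append_append u []

theorem append_right {s t : List G} (h : HurwitzEquiv s t) (v : List G) :
    HurwitzEquiv (s ++ v) (t ++ v) := by
  simpa using h.append_append [] v

theorem append {s t s' t' : List G} (h : HurwitzEquiv s t) (h' : HurwitzEquiv s' t') :
    HurwitzEquiv (s ++ s') (t ++ t') :=
  (h.append_right s').trans (h'.append_left t)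

theorem pair_conj_left (x y : G) : HurwitzEquiv [x, y] [x * y * x⁻¹, x] :=
  .single ⟨[], [], x, y, .inl ⟨rfl, rfl⟩⟩

theorem pair_conj_right (x y : G) : HurwitzEquiv [x, y] [y, y⁻¹ * x * y] :=
  .single ⟨[], [], x, y, .inr ⟨rfl, rfl⟩⟩

theorem pair_swap {x y : G} (h : Commute x y) : HurwitzEquiv [x, y] [y, x] := by
  simpa [h.eq] using pair_conj_left x y

theorem cons_of_forall_commute (x : G) (L : List G) (h : ∀ z ∈ L, Commute x z) :
    HurwitzEquiv (x :: L) (L ++ [x]) := by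
  induction L with
  | nil => exact .refl
  | cons z L ih =>
    have hz : HurwitzEquiv (x :: z :: L) (z :: x :: L) :=
      (pair_swap (h z List.mem_cons_self)).append_right L
    exact hz.trans ((ih fun w hw => h w (List.mem_cons_of_mem z hw)).append_left [z])

theorem flatMap {ι : Type*} (L : List ι) {f f' : ι → List G}
    (h : ∀ i ∈ L, HurwitzEquiv (f i) (f' i)) :
    HurwitzEquiv (L.flatMap f) (L.flatMap f') := by
  induction L with
  | nil => exact .refl
  | cons i L ih =>
    simp only [List.flatMap_cons]
    exact (h i List.mem_cons_self).append (ih fun j hj => h j (List.mem_cons_of_mem i hj))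

theorem flatMap_range_pair (u v : ℕ → G) (n : ℕ)
    (h : ∀ j k, j < k → k < n → Commute (v j) (u k)) :
    HurwitzEquiv ((List.range n).flatMap fun j => [u j, v j])
      ((List.range n).map u ++ (List.range n).map v) := by
  induction n with
  | zero => exact .refl
  | succ n ih =>
    have hlast : HurwitzEquiv ((List.range n).map v ++ [u n]) (u n :: (List.range n).map v) := by
      refine (cons_of_forall_commute (u n) _ fun z hz => ?_).symm
      obtain ⟨j, hj, rfl⟩ := List.mem_map.mp hz
      exact (h j n (List.mem_range.mp hj) n.lt_succ_self).symm
    have hfirst := ih fun j k hjk hk => h j k hjk (Nat.lt_succ_of_lt hk)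
    have hmove := (hlast.append_right [v n]).append_left ((List.range n).map u)
    have hshift := hfirst.append_right [u n, v n]
    simp only [List.append_assoc, List.cons_append, List.nil_append] at hshift hmove
    simpa [List.range_succ] using hshift.trans hmove

theorem flatMap_range_conj_left (x y : ℕ → G) (n : ℕ)
    (hx : ∀ j k, j < k → k < n → Commute (x j) (x k))
    (hy : ∀ j k, j < k → k < n → Commute (x j) (y k)) :
    HurwitzEquiv ((List.range n).flatMap fun j => [x j, y j])
      ((List.range n).map (fun j => x j * y j * (x j)⁻¹) ++ (List.range n).map x) :=
  (flatMap _ fun j _ => pair_conj_left (x j) (y j)).trans <|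
    flatMap_range_pair _ x n fun j k hjk hk =>
      ((hx j k hjk hk).mul_right (hy j k hjk hk)).mul_right (hx j k hjk hk).inv_right

theorem flatMap_range_conj_right (x y : ℕ → G) (n : ℕ)
    (hx : ∀ j k, j < k → k < n → Commute (x k) (x j))
    (hy : ∀ j k, j < k → k < n → Commute (x k) (y j)) :
    HurwitzEquiv ((List.range n).flatMap fun j => [y j, x j])
      ((List.range n).map x ++ (List.range n).map fun j => (x j)⁻¹ * y j * x j) :=
  (flatMap _ fun j _ => pair_conj_right (y j) (x j)).trans <|
    flatMap_range_pair x _ n fun j k hjk hk =>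
      (((hx j k hjk hk).inv_right.mul_right (hy j k hjk hk)).mul_right (hx j k hjk hk)).symm

end HurwitzEquiv

end

theorem statement10_general {G : Type*} [Group G] (l : ℕ) (a : ℕ → G)
    (hcomm : ∀ i j, 1 ≤ i → j ≤ 2 * l → i + 2 ≤ j → a i * a j = a j * a i) :
    HurwitzEquiv (seqAsc a 1 (2 * l))
      (((List.range l).map fun j => a (2 * j + 1) * a (2 * j + 2) * (a (2 * j + 1))⁻¹) ++
        ((List.range l).map fun j => a (2 * j + 1))) ∧
    HurwitzEquiv (seqDesc a (2 * l) 1)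
      (((List.range l).map fun j => a (2 * l - 1 - 2 * j)) ++
        ((List.range l).map fun j =>
          (a (2 * l - 2 * j - 1))⁻¹ * a (2 * l - 2 * j) * a (2 * l - 2 * j - 1))) := by
  have hcommute : ∀ i j, 1 ≤ i → j ≤ 2 * l → i + 2 ≤ j → Commute (a i) (a j) := hcomm
  constructor
  · rw [seqAsc_one_two_mul]
    exact HurwitzEquiv.flatMap_range_conj_left (fun j => a (2 * j + 1)) (fun j => a (2 * j + 2)) l
      (fun j k _ _ => hcommute _ _ (by omega) (by omega) (by omega))
      (fun j k _ _ => hcommute _ _ (by omega) (by omega) (by omega))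
  · rw [seqDesc_two_mul_one]
    simp only [Nat.sub_right_comm (2 * l) 1]
    exact HurwitzEquiv.flatMap_range_conj_right (fun j => a (2 * l - 2 * j - 1))
      (fun j => a (2 * l - 2 * j)) l
      (fun j k _ _ => hcommute _ _ (by omega) (by omega) (by omega))
      (fun j k _ _ => hcommute _ _ (by omega) (by omega) (by omega))

/-- relations (8) and (10) of the paper: with
`γ (i+1) = a i * a (i+1) * (a i)⁻¹` and `γ̄ (i+1) = (a i)⁻¹ * a (i+1) * a i`,
`(a 1, a 2, …, a (2l)) ∼ (γ 2, γ 4, …, γ (2l), a 1, a 3, …, a (2l-1))` and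
`(a (2l), …, a 2, a 1) ∼ (a (2l-1), …, a 3, a 1, γ̄ (2l), γ̄ (2l-2), …, γ̄ 2)`. -/
theorem statement10 {G : Type*} [Group G] (l : ℕ) (hl : 1 ≤ l) (a : ℕ → G)
    (hbraid : ∀ i, 1 ≤ i → i + 1 ≤ 2 * l →
      a i * a (i + 1) * a i = a (i + 1) * a i * a (i + 1))
    (hcomm : ∀ i j, 1 ≤ i → j ≤ 2 * l → i + 2 ≤ j → a i * a j = a j * a i) :
    HurwitzEquiv (seqAsc a 1 (2 * l))
      (((List.range l).map fun j => a (2 * j + 1) * a (2 * j + 2) * (a (2 * j + 1))⁻¹) ++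
        ((List.range l).map fun j => a (2 * j + 1))) ∧
    HurwitzEquiv (seqDesc a (2 * l) 1)
      (((List.range l).map fun j => a (2 * l - 1 - 2 * j)) ++
        ((List.range l).map fun j =>
          (a (2 * l - 2 * j - 1))⁻¹ * a (2 * l - 2 * j) * a (2 * l - 2 * j - 1))) :=
  statement10_general l a hcomm
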